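/- arXiv:1604.07613 — 6 statements merged into one kernel-verified Lean document; each statement's English description precedes it below -/
import Mathlib

section
/- For multiplicative characters A, B of F_q, define the Greene binomial coefficient binom(A,B) = (B(−1)/q)·J(A, B̄), where B̄ is the inverse character of B. Then binom(A,B) = binom(A, A·B̄). -/
/-!
The Möbius involution `y ↦ y / (y - 1)` of `F \ {1}` transforms `J(χ, ψ)` into
`χ(-1) J(χ, (χψ)⁻¹)`. Taking `χ = A`, `ψ = B̄` gives `B(-1) J(A, B̄) = (A B̄)(-1) J(A, (A B̄)⁻¹)`,
because `(A B̄)(-1) = A(-1) B(-1)`.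
-/

/-- Greene's binomial coefficient `binom(A,B) = (B(-1)/q)·J(A, B̄)`. -/
noncomputable def greeneBinom (F : Type) [Field F] [Fintype F] (A B : MulChar F ℂ) : ℂ :=
  B (-1) / (Fintype.card F : ℂ) * jacobiSum A B⁻¹

open Finset

section DivSubOne

variable {F : Type*} [Field F]

lemma div_sub_one_ne_one (y : F) : y / (y - 1) ≠ 1 := by
  rcases eq_or_ne (y - 1) 0 with h | h
  · simp [h]
  · rw [Ne, div_eq_one_iff_eq h]
    intro h'
    simpa using congrArg (y - ·) h'

lemma div_sub_one_div_sub_one {y : F} (hy : y ≠ 1) : y / (y - 1) / (y / (y - 1) - 1) = y := by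
  have : y - 1 ≠ 0 := sub_ne_zero.mpr hy
  field_simp
  ring

lemma one_sub_div_sub_one {y : F} (hy : y ≠ 1) : 1 - y / (y - 1) = (1 - y)⁻¹ := by
  have : y - 1 ≠ 0 := sub_ne_zero.mpr hy
  have : 1 - y ≠ 0 := sub_ne_zero.mpr hy.symm
  field_simp
  ring

end DivSubOne

namespace MulChar

variable {F R : Type*} [Field F] [CommRing R]

lemma inv_apply_neg_one (χ : MulChar F R) : χ⁻¹ (-1) = χ (-1) := by
  rw [inv_apply', inv_neg_one]

lemma apply_div_sub_one_mul_apply_one_sub (χ ψ : MulChar F R) {y : F} (hy : y ≠ 1) :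
    χ (y / (y - 1)) * ψ (1 - y / (y - 1)) = χ (-1) * (χ y * (χ * ψ)⁻¹ (1 - y)) := by
  have hneg : y - 1 = -1 * (1 - y) := by ring
  rw [one_sub_div_sub_one hy, div_eq_mul_inv, map_mul, ← inv_apply', ← inv_apply', hneg, map_mul,
    inv_apply_neg_one, mul_inv, mul_apply]
  ring

end MulChar

theorem jacobiSum_eq_apply_neg_one_mul_jacobiSum {F R : Type*} [Field F] [Fintype F] [CommRing R]
    (χ ψ : MulChar F R) : jacobiSum χ ψ = χ (-1) * jacobiSum χ (χ * ψ)⁻¹ := by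
  classical
  have hψ : χ 1 * ψ (1 - 1) = 0 := by rw [sub_self, MulChar.map_zero, mul_zero]
  have hχψ : χ (-1) * (χ 1 * (χ * ψ)⁻¹ (1 - 1)) = 0 := by
    rw [sub_self, MulChar.map_zero, mul_zero, mul_zero]
  rw [jacobiSum, jacobiSum, mul_sum, ← sum_erase univ (f := fun x ↦ χ x * ψ (1 - x)) hψ,
    ← sum_erase univ (f := fun x ↦ χ (-1) * (χ x * (χ * ψ)⁻¹ (1 - x))) hχψ]
  symm
  refine sum_nbij' (fun y ↦ y / (y - 1)) (fun y ↦ y / (y - 1)) ?_ ?_ ?_ ?_ ?_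
  · exact fun y _ ↦ mem_erase.mpr ⟨div_sub_one_ne_one y, mem_univ _⟩
  · exact fun y _ ↦ mem_erase.mpr ⟨div_sub_one_ne_one y, mem_univ _⟩
  · exact fun y hy ↦ div_sub_one_div_sub_one (ne_of_mem_erase hy)
  · exact fun y hy ↦ div_sub_one_div_sub_one (ne_of_mem_erase hy)
  · exact fun y hy ↦ (MulChar.apply_div_sub_one_mul_apply_one_sub χ ψ (ne_of_mem_erase hy)).symm

/-- `binom(A,B) = binom(A, A·B̄)`. -/
theorem greeneBinom_eq_self_mul_inv (F : Type) [Field F] [Fintype F]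
    (A B : MulChar F ℂ) :
    greeneBinom F A B = greeneBinom F A (A * B⁻¹) := by
  rw [greeneBinom, greeneBinom, jacobiSum_eq_apply_neg_one_mul_jacobiSum, MulChar.mul_apply,
    MulChar.inv_apply_neg_one]
  ring
end

section
/- For multiplicative characters A, B of F_q, the Greene binomial coefficient satisfies binom(A,B) = B(−1)·binom(B·Ā, B), where Ā is the inverse of A. -/
section

variable {F R : Type*} [Field F] [CommRing R]

lemma MulChar.apply_one_sub_inv (ψ : MulChar F R) {y : F} (hy : y ≠ 0) :
    ψ (1 - y⁻¹) = ψ (-1) * ψ⁻¹ y * ψ (1 - y) := by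
  have hsplit : 1 - y⁻¹ = -1 * y⁻¹ * (1 - y) := by field_simp; ring
  rw [hsplit, map_mul, map_mul, MulChar.inv_apply']

/-- The substitution `x ↦ x⁻¹` in the Jacobi sum. -/
lemma jacobiSum_eq_mul_jacobiSum_inv_mul_inv [Fintype F] [Nontrivial R] (χ ψ : MulChar F R) :
    jacobiSum χ ψ = ψ (-1) * jacobiSum (χ⁻¹ * ψ⁻¹) ψ := by
  rw [jacobiSum, ← Equiv.sum_comp (Equiv.inv F), jacobiSum, Finset.mul_sum]
  refine Finset.sum_congr rfl fun y _ => ?_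
  rcases eq_or_ne y 0 with rfl | hy
  · simp [MulChar.map_zero]
  rw [Equiv.inv_apply, ψ.apply_one_sub_inv hy, MulChar.mul_apply, ← MulChar.inv_apply']
  ring

end

/-- `binom(A,B) = B(-1)·binom(B·Ā, B)`. -/
theorem greeneBinom_reflect (F : Type) [Field F] [Fintype F]
    (A B : MulChar F ℂ) :
    greeneBinom F A B = B (-1) * greeneBinom F (B * A⁻¹) B := by
  have hB : B⁻¹ (-1) = B (-1) := by rw [MulChar.inv_apply', inv_neg_one]
  have hJ : jacobiSum A B⁻¹ = B (-1) * jacobiSum (B * A⁻¹) B⁻¹ := by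
    rw [jacobiSum_eq_mul_jacobiSum_inv_mul_inv, hB, inv_inv, mul_comm A⁻¹]
  rw [greeneBinom, greeneBinom, hJ]
  ring
end

section
/- Let A be a multiplicative character of F_q and x ∈ F_q. Then A(1+x) = δ(x) + (q/(q−1))·Σ_χ binom(A,χ)·χ(x), where the sum runs over all multiplicative characters χ of F_q, δ(0)=1 and δ(x)=0 for x ≠ 0. -/
open Finset

theorem sum_range_card_pow_eq_sum_univ {G M : Type*} [Group G] [Fintype G] [AddCommMonoid M]
    {g : G} (hg : ∀ x, x ∈ Subgroup.zpowers g) (f : G → M) :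
    ∑ m ∈ range (Nat.card G), f (g ^ m) = ∑ x, f x := by
  classical
  rw [← IsCyclic.image_range_card hg, sum_image]
  rw [← orderOf_eq_card_of_forall_mem_zpowers hg]
  exact fun i hi j hj ↦ pow_injOn_Iio_orderOf (by simpa using hi) (by simpa using hj)

namespace MulChar

variable {M R : Type*} [CommMonoid M] [Finite M] [CommRing R] [IsDomain R]
  [HasEnoughRootsOfUnity R (Monoid.exponent Mˣ)] [Fintype (MulChar M R)]

theorem sum_apply_eq_zero {a : M} (ha : a ≠ 1) : ∑ χ : MulChar M R, χ a = 0 := by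
  obtain ⟨χ, hχ⟩ := exists_apply_ne_one_of_hasEnoughRootsOfUnity M R ha
  refine eq_zero_of_mul_eq_self_left hχ ?_
  simp only [mul_sum, ← mul_apply]
  exact Fintype.sum_bijective _ (Group.mulLeft_bijective χ) _ _ fun _ ↦ rfl

theorem sum_apply [DecidableEq M] (a : M) :
    ∑ χ : MulChar M R, χ a = if a = 1 then (Nat.card Mˣ : R) else 0 := by
  split_ifs with ha
  · simp [ha, ← Nat.card_eq_fintype_card, card_eq_card_units_of_hasEnoughRootsOfUnity]
  · exact sum_apply_eq_zero ha

end MulChar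

theorem neg_mul_inv_one_sub_eq_one_iff {K : Type*} [Field K] {x t : K} :
    -x * (1 - t)⁻¹ = 1 ↔ x ≠ 0 ∧ t = 1 + x := by
  constructor
  · intro h
    have ht : 1 - t ≠ 0 := fun h0 ↦ by simp [h0] at h
    refine ⟨fun hx ↦ by simp [hx] at h, ?_⟩
    field_simp at h
    linear_combination h
  · rintro ⟨hx, rfl⟩
    rw [sub_add_cancel_left]
    exact mul_inv_cancel₀ (neg_ne_zero.mpr hx)

instance Monoid.neZero_exponent_cast {G R : Type*} [Group G] [Finite G] [AddMonoidWithOne R]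
    [CharZero R] : NeZero ((Monoid.exponent G : ℕ) : R) :=
  ⟨Nat.cast_ne_zero.mpr Monoid.exponent_ne_zero_of_finite⟩

section Greene

variable {F : Type} [Field F] [Fintype F]

theorem greeneBinom_mul_apply (A χ : MulChar F ℂ) (x : F) :
    greeneBinom F A χ * χ x = (Fintype.card F : ℂ)⁻¹ * ∑ t, A t * χ (-x * (1 - t)⁻¹) := by
  simp only [greeneBinom, jacobiSum, mul_sum, sum_mul, MulChar.inv_apply', map_mul]
  refine sum_congr rfl fun t _ ↦ ?_
  rw [show -x = -1 * x by ring, map_mul]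
  ring

theorem sum_greeneBinom_mul_apply [DecidableEq F] [Fintype (MulChar F ℂ)] (A : MulChar F ℂ)
    (x : F) :
    ∑ χ : MulChar F ℂ, greeneBinom F A χ * χ x
      = ((Fintype.card F : ℂ) - 1) / Fintype.card F * if x = 0 then 0 else A (1 + x) := by
  simp_rw [greeneBinom_mul_apply, ← mul_sum]
  rw [sum_comm]
  simp_rw [← mul_sum, MulChar.sum_apply, neg_mul_inv_one_sub_eq_one_iff]
  rw [Nat.card_eq_fintype_card, Fintype.card_units, Nat.cast_sub Fintype.card_pos, Nat.cast_one]
  by_cases hx : x = 0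
  · simp [hx]
  · simp only [hx, ne_eq, not_false_eq_true, true_and, if_false, mul_ite, mul_zero,
      sum_ite_eq', mem_univ, if_true]
    ring

end Greene

/-- `A(1+x) = δ(x) + (q/(q-1))·Σ_χ binom(A,χ)·χ(x)`, the sum being over all
multiplicative characters `χ = T^m`, `0 ≤ m ≤ q-2`, of `F_q`. -/
theorem mulChar_one_add_expansion (F : Type) [Field F] [Fintype F] [DecidableEq F] (q : ℕ)
    (hcard : Fintype.card F = q)
    (T : MulChar F ℂ) (hT : ∀ χ : MulChar F ℂ, ∃ k : ℕ, χ = T ^ k)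
    (A : MulChar F ℂ) (x : F) :
    A (1 + x) = (if x = 0 then 1 else 0)
      + ((q : ℂ) / ((q : ℂ) - 1)) *
          ∑ m ∈ Finset.range (q - 1), greeneBinom F A (T ^ m) * (T ^ m) x := by
  subst hcard
  have := Fintype.ofFinite (MulChar F ℂ)
  have hgen (χ : MulChar F ℂ) : χ ∈ Subgroup.zpowers T := by
    obtain ⟨k, rfl⟩ := hT χ
    exact Subgroup.npow_mem_zpowers T k
  have hcard_dual : Fintype.card F - 1 = Nat.card (MulChar F ℂ) := by
    rw [MulChar.card_eq_card_units_of_hasEnoughRootsOfUnity, Nat.card_eq_fintype_card,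
      Fintype.card_units]
  rw [hcard_dual, sum_range_card_pow_eq_sum_univ hgen (fun χ ↦ greeneBinom F A χ * χ x),
    sum_greeneBinom_mul_apply]
  have hq : (Fintype.card F : ℂ) - 1 ≠ 0 := by
    rw [sub_ne_zero, Ne, Nat.cast_eq_one]
    exact Fintype.one_lt_card.ne'
  by_cases hx : x = 0
  · simp [hx]
  · rw [if_neg hx, if_neg hx, zero_add]
    field_simp
end

section
/- Let F_q be a finite field, b ∈ F_q*, e a positive integer with q ≡ 1 (mod e), and θ a fixed nontrivial additive character. Then Σ_{y,z ∈ F_q*} θ(bz)·θ(−z·y^e) = 1 + q·Σ_{i=1}^{e−1} T^{−i(q−1)/e}(b), where T is a fixed generator of the character group of F_q*. -/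
/-!
Since `ψ (b z) ψ (-z y^e) = ψ ((b - y^e) z)`, the inner sum is a complete additive character sum
minus its `z = 0` term, namely `q [y^e = b] - 1`; hence `B = q N(b) - (q - 1)` where `N(b)` counts
the `e`-th roots of `b` in the cyclic group `F_q^*`. There `N(b)` is `e` or `0` according as
`b^((q-1)/e) = 1` or not, which is the geometric sum `Σ_{i<e} w^i` of the `e`-th root of unity
`w = T(b)^(-(q-1)/e)`: as `T` generates the character group, `w = 1` exactly when `b^((q-1)/e) = 1`.
-/

open Finset

theorem geom_sum_eq_ite_of_pow_eq_one {K : Type*} [DivisionRing K] [DecidableEq K] {w : K}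
    {n : ℕ} (hw : w ^ n = 1) : ∑ i ∈ range n, w ^ i = if w = 1 then (n : K) else 0 := by
  split_ifs with h
  · simp [h]
  · rw [geom_sum_eq h, hw, sub_self, zero_div]

theorem Fintype.sum_eq_add_sum_units {G₀ M : Type*} [GroupWithZero G₀] [Fintype G₀]
    [DecidableEq G₀] [AddCommMonoid M] (f : G₀ → M) : ∑ x, f x = f 0 + ∑ u : G₀ˣ, f u := by
  rw [← Fintype.sum_equiv unitsEquivNeZero.symm (fun a => f a) _ (fun _ => rfl),
    ← Finset.sum_subtype (univ.erase 0) (by simp) f, Finset.add_sum_erase _ _ (mem_univ 0)]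

theorem IsCyclic.range_powMonoidHom_eq_ker {G : Type*} [CommGroup G] [IsCyclic G] [Finite G]
    {e : ℕ} (he : e ∣ Nat.card G) :
    (powMonoidHom e : G →* G).range = (powMonoidHom (Nat.card G / e)).ker := by
  refine Subgroup.eq_of_le_of_card_ge ?_ ?_
  · rintro _ ⟨y, rfl⟩
    simp [← pow_mul, Nat.mul_div_cancel' he, pow_card_eq_one']
  · rw [card_powMonoidHom_ker, card_powMonoidHom_range, Nat.gcd_eq_right he,
      Nat.gcd_eq_right (Nat.div_dvd_of_dvd he)]

theorem IsCyclic.card_pow_eq_one_of_dvd {G : Type*} [CommGroup G] [IsCyclic G] [Fintype G]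
    [DecidableEq G] {e : ℕ} (he : e ∣ Nat.card G) : #{y : G | y ^ e = 1} = e := by
  calc #{y : G | y ^ e = 1} = Nat.card (powMonoidHom e : G →* G).ker := by
        rw [← Fintype.card_subtype, ← Nat.card_eq_fintype_card]
        rfl
    _ = e := by rw [card_powMonoidHom_ker, Nat.gcd_eq_right he]

theorem IsCyclic.card_pow_eq {G : Type*} [CommGroup G] [IsCyclic G] [Fintype G]
    [DecidableEq G] {e : ℕ} (he : e ∣ Nat.card G) (a : G) :
    #{y : G | y ^ e = a} = if a ^ (Nat.card G / e) = 1 then e else 0 := by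
  split_ifs with ha
  · have hrange : a ∈ (powMonoidHom e : G →* G).range := by
      rwa [range_powMonoidHom_eq_ker he]
    exact (MonoidHom.card_fiber_eq_of_mem_range (powMonoidHom e) hrange ⟨1, one_pow e⟩).trans
      (card_pow_eq_one_of_dvd he)
  · refine card_eq_zero.mpr (filter_eq_empty_iff.mpr fun y _ hy => ha ?_)
    rw [← hy, ← pow_mul, Nat.mul_div_cancel' he, pow_card_eq_one']

theorem MulChar.eq_one_of_apply_eq_one_of_forall_eq_pow {M R : Type*} [CommMonoid M] [Finite M]
    [CommRing R] [Nontrivial R] [HasEnoughRootsOfUnity R (Monoid.exponent Mˣ)]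
    {T : MulChar M R} (hT : ∀ χ : MulChar M R, ∃ k : ℕ, χ = T ^ k) {a : Mˣ} (ha : T a = 1) :
    a = 1 := by
  by_contra hne
  obtain ⟨χ, hχ⟩ :=
    exists_apply_ne_one_of_hasEnoughRootsOfUnity M R (Units.val_eq_one.not.mpr hne)
  obtain ⟨k, rfl⟩ := hT χ
  exact hχ (by rw [pow_apply_coe, ha, one_pow])

section FiniteField

variable {F : Type*} [Field F] [Fintype F] [DecidableEq F]

theorem MulChar.card_pow_eq_eq_sum_inv_pow_apply {K : Type*} [Field K]
    [HasEnoughRootsOfUnity K (Monoid.exponent Fˣ)]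
    {T : MulChar F K} (hT : ∀ χ : MulChar F K, ∃ k : ℕ, χ = T ^ k)
    {e : ℕ} (he : e ∣ Fintype.card F - 1) (u : Fˣ) :
    (#{y : Fˣ | y ^ e = u} : K)
      = ∑ i ∈ range e, ((T ^ (i * ((Fintype.card F - 1) / e)))⁻¹ : MulChar F K) u := by
  classical
  have hcard : Nat.card Fˣ = Fintype.card F - 1 := by
    rw [Nat.card_eq_fintype_card, Fintype.card_units]
  set d := (Fintype.card F - 1) / e
  have hTu : T u ^ (d * e) = 1 := by
    rw [Nat.div_mul_cancel he, ← hcard, ← map_pow, ← Units.val_pow_eq_pow_val,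
      pow_card_eq_one', Units.val_one, map_one]
  set w := (T u ^ d)⁻¹ with hw_def
  have hterm (i : ℕ) : ((T ^ (i * d))⁻¹ : MulChar F K) u = w ^ i := by
    rw [inv_apply_eq_inv', pow_apply_coe, mul_comm, pow_mul, inv_pow]
  have hw : w ^ e = 1 := by rw [hw_def, inv_pow, ← pow_mul, hTu, inv_one]
  have hw_eq_one : w = 1 ↔ u ^ d = 1 := by
    rw [hw_def, inv_eq_one, ← map_pow, ← Units.val_pow_eq_pow_val]
    exact ⟨eq_one_of_apply_eq_one_of_forall_eq_pow hT,
      fun h => by rw [h, Units.val_one, map_one]⟩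
  rw [sum_congr rfl fun i _ => hterm i, geom_sum_eq_ite_of_pow_eq_one hw,
    IsCyclic.card_pow_eq (hcard ▸ he), hcard]
  simp only [hw_eq_one]
  split_ifs <;> simp

theorem AddChar.sum_units_mulShift {R : Type*} [CommRing R] [IsDomain R] {ψ : AddChar F R}
    (hψ : ψ ≠ 1) (c : F) :
    ∑ z : Fˣ, ψ (c * z) = (if c = 0 then (Fintype.card F : R) else 0) - 1 := by
  have h := AddChar.sum_mulShift c (AddChar.IsPrimitive.of_ne_one hψ)
  rw [Fintype.sum_eq_add_sum_units, zero_mul, AddChar.map_zero_eq_one, Nat.cast_ite,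
    Nat.cast_zero] at h
  simp_rw [mul_comm c, ← h]
  ring

theorem AddChar.sum_units_sum_units_mul_neg_pow {R : Type*} [CommRing R] [IsDomain R]
    {ψ : AddChar F R} (hψ : ψ ≠ 1) (e : ℕ) (u : Fˣ) :
    ∑ y : Fˣ, ∑ z : Fˣ, ψ (u * z) * ψ (-(z * (y : F) ^ e))
      = Fintype.card F * #{y : Fˣ | y ^ e = u} - (Fintype.card F - 1) := by
  calc ∑ y : Fˣ, ∑ z : Fˣ, ψ (u * z) * ψ (-(z * (y : F) ^ e))
      = ∑ y : Fˣ, ∑ z : Fˣ, ψ ((u - (y : F) ^ e) * z) := by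
        simp_rw [← AddChar.map_add_eq_mul, sub_mul, sub_eq_add_neg, mul_comm]
    _ = ∑ y : Fˣ, ((if y ^ e = u then (Fintype.card F : R) else 0) - 1) := by
        simp_rw [AddChar.sum_units_mulShift hψ, sub_eq_zero, ← Units.val_pow_eq_pow_val,
          Units.val_inj, eq_comm]
    _ = Fintype.card F * #{y : Fˣ | y ^ e = u} - (Fintype.card F - 1) := by
        rw [sum_sub_distrib, ← sum_filter, sum_const, sum_const, card_univ, Fintype.card_units]
        simp [Nat.cast_sub Fintype.card_pos, mul_comm]

end FiniteField

/-- Evaluation of the character sum `B = Σ_{y,z ∈ F_q^*} θ(bz)θ(-z y^e)`: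
it equals `1 + q·Σ_{i=1}^{e-1} T^{-i(q-1)/e}(b)`. -/
theorem sum_B_eval (F : Type) [Field F] [Fintype F] [DecidableEq F] (q : ℕ)
    (hcard : Fintype.card F = q)
    (ψ : AddChar F ℂ) (hψ : ψ ≠ 1)
    (T : MulChar F ℂ) (hT : ∀ χ : MulChar F ℂ, ∃ k : ℕ, χ = T ^ k)
    (e : ℕ) (he : 0 < e) (hqe : e ∣ q - 1)
    (b : F) (hb : b ≠ 0) :
    ∑ y : Fˣ, ∑ z : Fˣ, ψ (b * z) * ψ (-(z * (y : F) ^ e))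
      = 1 + (q : ℂ) * ∑ i ∈ Finset.Icc 1 (e - 1), ((T ^ (i * ((q - 1) / e)))⁻¹ : MulChar F ℂ) b := by
  lift b to Fˣ using hb.isUnit
  subst hcard
  rw [AddChar.sum_units_sum_units_mul_neg_pow hψ,
    MulChar.card_pow_eq_eq_sum_inv_pow_apply hT hqe, sum_range_eq_add_Ico _ he,
    Icc_sub_one_right_eq_Ico_of_not_isMin (not_isMin_iff_ne_bot.mpr he.ne')]
  simp only [zero_mul, pow_zero, inv_one, MulChar.one_apply_coe]
  ring
end

section
/- Let q be an odd prime power, and α, β ∈ F_q* with α ≠ β. The number of affine points on the twisted Edwards curve C_{α,β}: αx^2 + y^2 = 1 + βx^2y^2 over F_q equals q − 1 − φ(β) − φ(αβ) + q·φ(−α)·₂F₁(φ, φ; ε | β/α), where φ is the quadratic character and ε the trivial character of F_q. -/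
/-!
Solving for `y`, the curve has `1 + φ((1 - βx²)(1 - αx²))` points above each `x` with `βx² ≠ 1`
and none above the two roots of `βx² = 1`. Grouping the `x` by `t = x²` weights each `t` by
`1 + φ(t)`; the part `∑ φ((1 - αt)(1 - βt)) = -φ(αβ)` is a Jacobi sum after an affine change of
variables, and the rest, `∑ φ(t(1 - αt)(1 - βt))`, is Greene's integral representation of
`₂F₁(φ, φ; ε | β/α)`: expanding both binomial coefficients as Jacobi sums and summing over the
characters by orthogonality leaves a sum over the solutions of `uvx = (1 - u)(1 - v)`, which
`s = u / (u - 1)` parametrizes. Euler's criterion identifies `T ^ ((q - 1) / 2)` with the quadratic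
character.
-/

open Finset

/-- Greene`s Gaussian hypergeometric series `₂F₁(A,B;C|x)`, with the sum over all
multiplicative characters written as `χ = T^m` for a generator `T`. -/
noncomputable def hyp2F1 (F : Type) [Field F] [Fintype F] (q : ℕ)
    (T A B C : MulChar F ℂ) (x : F) : ℂ :=
  (q : ℂ) / ((q : ℂ) - 1) *
    ∑ m ∈ Finset.range (q - 1),
      greeneBinom F (A * T ^ m) (T ^ m) * greeneBinom F (B * T ^ m) (C * T ^ m) * (T ^ m) x

theorem MulChar.IsQuadratic.apply_sq {R R' : Type*} [CommMonoid R] [CommRing R']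
    {χ : MulChar R R'} (hχ : χ.IsQuadratic) {a : R} (ha : IsUnit a) : χ (a ^ 2) = 1 := by
  rw [map_pow, ← MulChar.pow_apply' χ two_ne_zero, hχ.sq_eq_one, MulChar.one_apply ha]

theorem eq_div_of_mul_mul_eq_one_sub_mul_one_sub {K : Type*} [Field K] {u v x : K}
    (h : u * v * x = (1 - u) * (1 - v)) (h0 : u * v * x ≠ 0) :
    u ≠ 0 ∧ u - 1 ≠ 0 ∧ 1 - u + u * x ≠ 0 ∧ v = (1 - u) / (1 - u + u * x) := by
  have hu : u ≠ 0 := by rintro rfl; simp at h0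
  have hu1 : u - 1 ≠ 0 := fun hu1 ↦
    h0 (by rw [h, show 1 - u = 0 by linear_combination -hu1, zero_mul])
  have hv : v * (1 - u + u * x) = 1 - u := by linear_combination h
  have hd : 1 - u + u * x ≠ 0 := by
    intro hd
    rw [hd, mul_zero] at hv
    exact hu1 (by linear_combination hv)
  exact ⟨hu, hu1, hd, eq_div_of_mul_eq hd hv⟩

section

variable {F : Type} [Field F] [Fintype F]

section Generator

variable {T : MulChar F ℂ} (hT : ∀ χ : MulChar F ℂ, ∃ k : ℕ, χ = T ^ k)
include hT

theorem eq_one_of_generator_apply_eq_one {a : F} (ha : a ≠ 0) (h : T a = 1) : a = 1 := by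
  by_contra hne
  have : NeZero ((Monoid.exponent Fˣ : ℕ) : ℂ) :=
    ⟨by exact_mod_cast Monoid.exponent_ne_zero_of_finite⟩
  obtain ⟨χ, hχ⟩ := MulChar.exists_apply_ne_one_of_hasEnoughRootsOfUnity F ℂ hne
  obtain ⟨k, rfl⟩ := hT χ
  lift a to Fˣ using ha.isUnit
  exact hχ (by rw [MulChar.pow_apply_coe, h, one_pow])

theorem sum_range_generator_pow_apply_mul_inv_apply [DecidableEq F] (a b : F) :
    ∑ m ∈ range (Fintype.card F - 1), (T ^ m) a * (T ^ m)⁻¹ b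
      = if a = b ∧ a ≠ 0 then (Fintype.card F : ℂ) - 1 else 0 := by
  by_cases ha : a = 0
  · simp [ha, MulChar.map_zero]
  by_cases hb : b = 0
  · simp [hb, ha, MulChar.map_zero]
  have hab : a / b ≠ 0 := div_ne_zero ha hb
  have hterm : ∀ m : ℕ, (T ^ m) a * (T ^ m)⁻¹ b = T (a / b) ^ m := by
    intro m
    lift a / b to Fˣ using hab.isUnit with u hu
    rw [MulChar.inv_apply', ← map_mul, ← div_eq_mul_inv, ← hu, MulChar.pow_apply_coe]
  simp only [hterm]
  by_cases heq : a = b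
  · subst heq
    simp [ha, Nat.cast_sub Fintype.card_pos]
  · have hne : T (a / b) ≠ 1 := fun h ↦
      heq (div_eq_one_iff_eq hb |>.mp (eq_one_of_generator_apply_eq_one hT hab h))
    rw [if_neg (fun h ↦ heq h.1), geom_sum_eq hne, ← map_pow,
      FiniteField.pow_card_sub_one_eq_one _ hab, map_one, sub_self, zero_div]

theorem generator_pow_card_div_two_eq_quadraticChar [DecidableEq F] (hF : ringChar F ≠ 2) :
    T ^ (Fintype.card F / 2) = (quadraticChar F).ringHomComp (Int.castRingHom ℂ) := by
  have hT_neg_one : T (-1) = -1 :=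
    (mul_self_eq_one_iff.mp (by rw [← map_mul]; simp)).resolve_left fun h ↦
      Ring.neg_one_ne_one_of_char_ne_two hF (eq_one_of_generator_apply_eq_one hT (by simp) h)
  refine MulChar.ext fun a ↦ ?_
  rw [MulChar.pow_apply_coe, ← map_pow, MulChar.ringHomComp_apply,
    quadraticChar_eq_pow_of_char_ne_two hF a.ne_zero]
  rcases FiniteField.pow_dichotomy hF a.ne_zero with h | h
  · simp [h]
  · simp [h, hT_neg_one, Ring.neg_one_ne_one_of_char_ne_two hF]

end Generator

section QuadraticChar

variable [DecidableEq F] (hF : ringChar F ≠ 2)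
include hF

theorem card_filter_mul_sq_eq {c : F} (hc : c ≠ 0) (d : F) :
    (#{y : F | c * y ^ 2 = d} : ℤ) = quadraticChar F (c * d) + 1 := by
  have hsqrt := quadraticChar_card_sqrts hF (d / c)
  rw [Set.toFinset_ofPred] at hsqrt
  have hcd : d / c = c * d * (c⁻¹) ^ 2 := by field_simp
  rw [hcd, map_mul, quadraticChar_sq_one' (inv_ne_zero hc), mul_one, ← hcd] at hsqrt
  rw [← hsqrt]
  congr 2
  ext y
  simp [eq_div_iff hc, mul_comm]

theorem sum_apply_sq_eq_sum_quadraticChar (f : F → ℤ) :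
    ∑ x : F, f (x ^ 2) = ∑ t : F, (quadraticChar F t + 1) * f t := by
  rw [← sum_fiberwise_of_maps_to (g := (· ^ 2)) (fun x _ ↦ mem_univ (x ^ 2))]
  refine sum_congr rfl fun t _ ↦ ?_
  rw [sum_congr rfl fun x hx ↦ congrArg f (mem_filter.mp hx).2, sum_const, nsmul_eq_mul]
  have := quadraticChar_card_sqrts hF t
  rw [Set.toFinset_ofPred] at this
  rw [this]

theorem sum_quadraticChar_one_sub_mul_one_sub {a b : F} (ha : a ≠ 0) (hb : b ≠ 0) (hab : a ≠ b) :
    ∑ t : F, quadraticChar F ((1 - a * t) * (1 - b * t)) = -quadraticChar F (a * b) := by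
  set c := b⁻¹ - a⁻¹
  have hc : c ≠ 0 := sub_ne_zero.mpr (inv_injective.ne hab.symm)
  have hsq : quadraticChar F (((a - b) / (a * b)) ^ 2) = 1 :=
    quadraticChar_sq_one' (div_ne_zero (sub_ne_zero.mpr hab) (mul_ne_zero ha hb))
  -- `t = a⁻¹ + c * s` moves the roots to `0` and `1`, leaving the Jacobi sum `J(χ, χ)`
  have hsub : ∀ s : F, (1 - a * (a⁻¹ + c * s)) * (1 - b * (a⁻¹ + c * s))
      = -1 * (a * b) * ((a - b) / (a * b)) ^ 2 * (s * (1 - s)) := by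
    intro s
    simp only [c]
    field_simp
    ring
  have hJ := jacobiSum_nontrivial_inv (quadraticChar_ne_one hF)
  rw [(quadraticChar_isQuadratic F).inv, jacobiSum] at hJ
  calc ∑ t : F, quadraticChar F ((1 - a * t) * (1 - b * t))
      = ∑ s : F, quadraticChar F ((1 - a * (a⁻¹ + c * s)) * (1 - b * (a⁻¹ + c * s))) :=
        (Fintype.sum_bijective _ ((AddGroup.addLeft_bijective a⁻¹).comp
          (mulLeft_bijective₀ c hc)) _ _ fun _ ↦ rfl).symm
    _ = quadraticChar F (-1 * (a * b)) * ∑ s : F, quadraticChar F s * quadraticChar F (1 - s) := by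
        simp only [hsub, map_mul, hsq, mul_one, mul_sum]
    _ = -quadraticChar F (a * b) := by
        rw [hJ, mul_neg, map_mul, mul_comm, ← mul_assoc, ← map_mul]
        simp

theorem card_filter_twistedEdwards_fiber {α β : F} (hαβ : α ≠ β) (x : F) :
    (#{y : F | α * x ^ 2 + y ^ 2 = 1 + β * x ^ 2 * y ^ 2} : ℤ)
      = quadraticChar F ((1 - β * x ^ 2) * (1 - α * x ^ 2)) + 1
        - if β * x ^ 2 = 1 then 1 else 0 := by
  by_cases hx : β * x ^ 2 = 1
  · have hempty : #{y : F | α * x ^ 2 + y ^ 2 = 1 + β * x ^ 2 * y ^ 2} = 0 := by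
      refine card_eq_zero.mpr (filter_eq_empty_iff.mpr fun y _ hy ↦ hαβ ?_)
      have hx0 : x ^ 2 ≠ 0 := by rintro h; simp [h] at hx
      exact mul_right_cancel₀ hx0 (by rw [hx] at hy ⊢; linear_combination hy)
    rw [hempty]
    simp [hx]
  · rw [if_neg hx, sub_zero, ← card_filter_mul_sq_eq hF (sub_ne_zero.mpr (Ne.symm hx))]
    congr 2
    ext y
    simp only [mem_filter, mem_univ, true_and]
    constructor <;> intro h <;> linear_combination h

theorem card_filter_twistedEdwards {α β : F} (hα : α ≠ 0) (hβ : β ≠ 0) (hαβ : α ≠ β) :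
    (#{P : F × F | α * P.1 ^ 2 + P.2 ^ 2 = 1 + β * P.1 ^ 2 * P.2 ^ 2} : ℤ)
      = Fintype.card F - 1 - quadraticChar F β - quadraticChar F (α * β)
        + ∑ t : F, quadraticChar F (t * (1 - α * t) * (1 - β * t)) := by
  have hfibers : (#{P : F × F | α * P.1 ^ 2 + P.2 ^ 2 = 1 + β * P.1 ^ 2 * P.2 ^ 2} : ℤ)
      = ∑ x : F, (#{y : F | α * x ^ 2 + y ^ 2 = 1 + β * x ^ 2 * y ^ 2} : ℤ) := by
    simp only [card_filter, Fintype.sum_prod_type, Nat.cast_sum]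
  have hsq : ∑ x : F, quadraticChar F ((1 - β * x ^ 2) * (1 - α * x ^ 2))
      = ∑ t : F, quadraticChar F (t * (1 - α * t) * (1 - β * t))
        + ∑ t : F, quadraticChar F ((1 - α * t) * (1 - β * t)) := by
    rw [sum_apply_sq_eq_sum_quadraticChar hF (fun t ↦ quadraticChar F ((1 - β * t) * (1 - α * t))),
      ← sum_add_distrib]
    refine sum_congr rfl fun t _ ↦ ?_
    rw [add_mul, one_mul, ← map_mul]
    ring_nf
  have hroots : ∑ x : F, (if β * x ^ 2 = 1 then 1 else 0 : ℤ) = quadraticChar F β + 1 := by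
    rw [sum_boole, card_filter_mul_sq_eq hF hβ 1, mul_one]
  rw [hfibers, sum_congr rfl fun x _ ↦ card_filter_twistedEdwards_fiber hF hαβ x, sum_sub_distrib,
    sum_add_distrib, hsq, hroots, sum_quadraticChar_one_sub_mul_one_sub hF hα hβ hαβ]
  simp only [sum_const, card_univ, nsmul_eq_mul, mul_one]
  ring

end QuadraticChar

theorem greeneBinom_mul_greeneBinom_one_mul_apply (A B χ : MulChar F ℂ) (x : F) :
    greeneBinom F (A * χ) χ * greeneBinom F (B * χ) (1 * χ) * χ x
      = 1 / (Fintype.card F : ℂ) ^ 2 *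
        ∑ u : F, ∑ v : F, A u * B v * (χ (u * v * x) * χ⁻¹ ((1 - u) * (1 - v))) := by
  have hsq : χ (-1) * χ (-1) = 1 := by rw [← map_mul]; norm_num
  rw [greeneBinom, greeneBinom, one_mul, show ∀ a J K : ℂ,
      a / Fintype.card F * J * (a / Fintype.card F * K) * χ x
        = a * a * (1 / (Fintype.card F : ℂ) ^ 2 * (J * K * χ x)) by intros; ring, hsq, one_mul,
    jacobiSum, jacobiSum, sum_mul_sum, sum_mul]
  refine congrArg _ (sum_congr rfl fun u _ ↦ ?_)
  rw [sum_mul]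
  refine sum_congr rfl fun v _ ↦ ?_
  simp only [MulChar.mul_apply, map_mul]
  ring

theorem sum_solutions_eq_sum_of_isQuadratic [DecidableEq F] {R : Type*} [CommRing R]
    {φ : MulChar F R} (hφ : φ.IsQuadratic) {x : F} (hx : x ≠ 0) :
    ∑ u : F, ∑ v : F, (if u * v * x = (1 - u) * (1 - v) ∧ u * v * x ≠ 0 then φ u * φ v else 0)
      = φ (-1) * ∑ s : F, φ (s * (1 - s) * (1 - x * s)) := by
  -- `s = u / (u - 1)` parametrizes the solutions `(u, v)`
  have hparam : ∀ s : F, s * (1 - s) * (1 - x * s) ≠ 0 → s ≠ 0 ∧ s - 1 ≠ 0 ∧ 1 - x * s ≠ 0 :=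
    fun s hs ↦ ⟨left_ne_zero_of_mul (left_ne_zero_of_mul hs),
      sub_ne_zero.mpr (sub_ne_zero.mp (right_ne_zero_of_mul (left_ne_zero_of_mul hs))).symm,
      right_ne_zero_of_mul hs⟩
  rw [← Fintype.sum_prod_type' (f := fun u v ↦
      if u * v * x = (1 - u) * (1 - v) ∧ u * v * x ≠ 0 then φ u * φ v else 0), ← sum_filter,
    mul_sum, ← sum_filter_of_ne (p := fun s ↦ s * (1 - s) * (1 - x * s) ≠ 0)
      fun s _ h hs ↦ h (by rw [hs, MulChar.map_zero, mul_zero])]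
  refine sum_nbij' (fun p ↦ p.1 / (p.1 - 1)) (fun s ↦ (s / (s - 1), 1 / (1 - x * s)))
    ?_ ?_ ?_ ?_ ?_
  · rintro ⟨u, v⟩ hp
    simp only [mem_filter, mem_univ, true_and] at hp ⊢
    obtain ⟨hu, hu1, hd, -⟩ := eq_div_of_mul_mul_eq_one_sub_mul_one_sub hp.1 hp.2
    have : u / (u - 1) * (1 - u / (u - 1)) * (1 - x * (u / (u - 1)))
        = u * (1 - u + u * x) / (u - 1) ^ 3 := by
      field_simp
      ring
    rw [this]
    exact div_ne_zero (mul_ne_zero hu hd) (pow_ne_zero 3 hu1)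
  · intro s hs
    simp only [mem_filter, mem_univ, true_and] at hs ⊢
    obtain ⟨hs0, hs1, hxs⟩ := hparam s hs
    have hxs' : 1 - s * x ≠ 0 := by rwa [mul_comm]
    refine ⟨?_, mul_ne_zero (mul_ne_zero (div_ne_zero hs0 hs1) (one_div_ne_zero hxs)) hx⟩
    field_simp
    ring
  · rintro ⟨u, v⟩ hp
    simp only [mem_filter, mem_univ, true_and] at hp
    obtain ⟨hu, hu1, hd, rfl⟩ := eq_div_of_mul_mul_eq_one_sub_mul_one_sub hp.1 hp.2
    have h1u : 1 - u ≠ 0 := by rw [← neg_sub]; exact neg_ne_zero.mpr hu1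
    ext
    · field_simp
      ring
    · rw [show 1 - x * (u / (u - 1)) = (1 - u + u * x) / (1 - u) by field_simp; ring, one_div_div]
  · intro s hs
    simp only [mem_filter, mem_univ, true_and] at hs
    have hs1 := (hparam s hs).2.1
    field_simp
    ring
  · rintro ⟨u, v⟩ hp
    simp only [mem_filter, mem_univ, true_and] at hp
    obtain ⟨hu, hu1, hd, rfl⟩ := eq_div_of_mul_mul_eq_one_sub_mul_one_sub hp.1 hp.2
    have : u * ((1 - u) / (1 - u + u * x))
        = -1 * (u / (u - 1) * (1 - u / (u - 1)) * (1 - x * (u / (u - 1))))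
          * ((u - 1) ^ 2 / (1 - u + u * x)) ^ 2 := by
      field_simp
      ring
    rw [← map_mul, this, map_mul, map_mul, hφ.apply_sq (div_ne_zero (pow_ne_zero 2 hu1) hd).isUnit, mul_one]

theorem sum_apply_mul_one_sub_mul_one_sub_eq_mul_sum {R : Type*} [CommRing R] (χ : MulChar F R)
    {α : F} (hα : α ≠ 0) (β : F) :
    ∑ t : F, χ (t * (1 - α * t) * (1 - β * t))
      = χ α⁻¹ * ∑ s : F, χ (s * (1 - s) * (1 - β / α * s)) := by
  rw [mul_sum]
  refine (Fintype.sum_bijective _ (mulLeft_bijective₀ α⁻¹ (inv_ne_zero hα)) _ _ fun s ↦ ?_).symm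
  rw [← map_mul]
  congr 1
  field_simp

section Hypergeometric

variable [DecidableEq F] {T : MulChar F ℂ} (hT : ∀ χ : MulChar F ℂ, ∃ k : ℕ, χ = T ^ k)
include hT

theorem hyp2F1_one_eq_sum_solutions (A B : MulChar F ℂ) (x : F) :
    hyp2F1 F (Fintype.card F) T A B 1 x
      = 1 / (Fintype.card F : ℂ) * ∑ u : F, ∑ v : F,
          if u * v * x = (1 - u) * (1 - v) ∧ u * v * x ≠ 0 then A u * B v else 0 := by
  have hq : (Fintype.card F : ℂ) ≠ 0 := Nat.cast_ne_zero.mpr Fintype.card_ne_zero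
  have hq1 : (Fintype.card F : ℂ) - 1 ≠ 0 :=
    sub_ne_zero.mpr (by exact_mod_cast Fintype.one_lt_card.ne')
  have hswap : ∀ f : ℕ → F → F → ℂ, ∑ m ∈ range (Fintype.card F - 1), ∑ u, ∑ v, f m u v
      = ∑ u, ∑ v, ∑ m ∈ range (Fintype.card F - 1), f m u v := fun f ↦ by
    rw [sum_comm]; exact sum_congr rfl fun _ _ ↦ sum_comm
  have hfactor : ∀ (P : Prop) [Decidable P] (a c : ℂ),
      a * (if P then c else 0) = (if P then a else 0) * c :=
    fun P _ a c ↦ by split_ifs <;> ring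
  simp only [hyp2F1, greeneBinom_mul_greeneBinom_one_mul_apply, ← mul_sum, hswap,
    sum_range_generator_pow_apply_mul_inv_apply hT, hfactor, ← sum_mul]
  generalize (∑ u : F, ∑ v : F, _ : ℂ) = S
  field_simp

theorem hyp2F1_eq_sum_of_isQuadratic {φ : MulChar F ℂ} (hφ : φ.IsQuadratic) {x : F}
    (hx : x ≠ 0) :
    hyp2F1 F (Fintype.card F) T φ φ 1 x
      = φ (-1) / Fintype.card F * ∑ s : F, φ (s * (1 - s) * (1 - x * s)) := by
  rw [hyp2F1_one_eq_sum_solutions hT, sum_solutions_eq_sum_of_isQuadratic hφ hx]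
  ring

theorem sum_apply_mul_one_sub_mul_one_sub_eq_hyp2F1 {φ : MulChar F ℂ} (hφ : φ.IsQuadratic)
    {α β : F} (hα : α ≠ 0) (hβ : β ≠ 0) :
    ∑ t : F, φ (t * (1 - α * t) * (1 - β * t))
      = Fintype.card F * φ (-α) * hyp2F1 F (Fintype.card F) T φ φ 1 (β / α) := by
  have hq : (Fintype.card F : ℂ) ≠ 0 := Nat.cast_ne_zero.mpr Fintype.card_ne_zero
  have hinv : φ α⁻¹ = φ (-α) * φ (-1) := by
    rw [← MulChar.inv_apply', hφ.inv, ← map_mul, neg_mul_neg, mul_one]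
  rw [sum_apply_mul_one_sub_mul_one_sub_eq_mul_sum φ hα, hyp2F1_eq_sum_of_isQuadratic hT hφ
    (div_ne_zero hβ hα), hinv]
  generalize ∑ s : F, φ (s * (1 - s) * (1 - β / α * s)) = S
  field_simp

end Hypergeometric

end

theorem twisted_edwards_count_general (F : Type) [Field F] [Fintype F] [DecidableEq F] (q : ℕ)
    (hcard : Fintype.card F = q) (hodd : Odd q)
    (T : MulChar F ℂ) (hT : ∀ χ : MulChar F ℂ, ∃ k : ℕ, χ = T ^ k)
    (φ : MulChar F ℂ) (hφ : φ = T ^ ((q - 1) / 2))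
    (α β : F) (hα : α ≠ 0) (hβ : β ≠ 0) (hαβ : α ≠ β) :
    ((Finset.univ.filter
        (fun P : F × F => α * P.1 ^ 2 + P.2 ^ 2 = 1 + β * P.1 ^ 2 * P.2 ^ 2)).card : ℂ)
      = (q : ℂ) - 1 - φ β - φ (α * β)
        + (q : ℂ) * φ (-α) * hyp2F1 F q T φ φ 1 (β / α) := by
  subst hcard
  have hF : ringChar F ≠ 2 := fun h ↦
    Nat.not_odd_iff.mpr (FiniteField.even_card_iff_char_two.mp h) hodd
  have hφχ : φ = (quadraticChar F).ringHomComp (Int.castRingHom ℂ) := by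
    rw [hφ, ← generator_pow_card_div_two_eq_quadraticChar hT hF]
    obtain ⟨k, hk⟩ := hodd
    congr 1
    omega
  rw [← sum_apply_mul_one_sub_mul_one_sub_eq_hyp2F1 hT
    (hφχ ▸ (quadraticChar_isQuadratic F).comp _) hα hβ, hφχ]
  simp only [MulChar.ringHomComp_apply, eq_intCast]
  exact_mod_cast card_filter_twistedEdwards hF hα hβ hαβ

/-- The number of affine points on the twisted Edwards curve
`C_{α,β} : αx² + y² = 1 + βx²y²` equals
`q - 1 - φ(β) - φ(αβ) + q·φ(-α)·₂F₁(φ, φ; ε | β/α)`. -/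
theorem twisted_edwards_count (F : Type) [Field F] [Fintype F] [DecidableEq F] (q : ℕ)
    (hcard : Fintype.card F = q) (hq : IsPrimePow q) (hodd : Odd q)
    (T : MulChar F ℂ) (hT : ∀ χ : MulChar F ℂ, ∃ k : ℕ, χ = T ^ k)
    (φ : MulChar F ℂ) (hφ : φ = T ^ ((q - 1) / 2))
    (α β : F) (hα : α ≠ 0) (hβ : β ≠ 0) (hαβ : α ≠ β) :
    ((Finset.univ.filter
        (fun P : F × F => α * P.1 ^ 2 + P.2 ^ 2 = 1 + β * P.1 ^ 2 * P.2 ^ 2)).card : ℂ)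
      = (q : ℂ) - 1 - φ β - φ (α * β)
        + (q : ℂ) * φ (-α) * hyp2F1 F q T φ φ 1 (β / α) :=
  twisted_edwards_count_general F q hcard hodd T hT φ hφ α β hα hβ hαβ
end

section
/- Let q ≡ 1 (mod 4) be a prime power, φ the quadratic character and ε the trivial character of F_q, and T a generator of the character group. Then ₂F₁(φ, φ; ε | 1/2) = φ(−2)·[binom(T^{(q−1)/4}, φ) + binom(T^{3(q−1)/4}, φ)]. -/
/-!
Substituting `a = x/(1-x)` in the Jacobi sum gives `binom(Aχ, χ) = χ(-1)/q · Σ_a A(a/(1+a)) χ(a)`,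
so orthogonality of the characters `T^m` turns `₂F₁(φ, φ; ε | c)` into a multiplicative
convolution. For `c = 1/2` and `φ(-1) = 1` (this is where `q ≡ 1 mod 4` enters) it equals
`φ(2)/q · Σ_u φ(u) φ(1-u²)`, a point count on `y² = x³ - x`. On the other side, with
`ψ = T^((q-1)/4)`, the function `ψ + ψ³` is fixed by multiplication with `1 + φ`, the number of
square roots, so `Σ_t (ψ + ψ³)(t) φ(1-t) = ½ Σ_u (ψ + ψ³)(u²) φ(1-u²)`, and
`(ψ + ψ³)(u²) = 2φ(u)` gives the same count.
-/

open Finset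

section Generator

variable {F : Type*} [Field F] [Fintype F] {T : MulChar F ℂ}

theorem MulChar.eq_one_of_apply_eq_one_of_forall_eq_pow_s17
    (hT : ∀ χ : MulChar F ℂ, ∃ k : ℕ, χ = T ^ k) {u : F} (hu : T u = 1) : u = 1 := by
  by_contra hu1
  obtain ⟨χ, hχ⟩ := MulChar.exists_apply_ne_one_of_hasEnoughRootsOfUnity F ℂ hu1
  obtain ⟨k, rfl⟩ := hT χ
  have hu0 : IsUnit u := isUnit_iff_ne_zero.mpr fun h => by simp [h] at hu
  exact hχ (by rw [← hu0.unit_spec, MulChar.pow_apply_coe, hu0.unit_spec, hu, one_pow])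

theorem MulChar.sum_range_pow_apply_of_forall_eq_pow [DecidableEq F]
    (hT : ∀ χ : MulChar F ℂ, ∃ k : ℕ, χ = T ^ k) (u : F) :
    ∑ m ∈ range (Fintype.card F - 1), (T ^ m) u
      = if u = 1 then (Fintype.card F : ℂ) - 1 else 0 := by
  rcases eq_or_ne u 0 with rfl | hu0
  · simp
  have hpow (m : ℕ) : (T ^ m) u = T u ^ m := by
    rw [← hu0.isUnit.unit_spec, MulChar.pow_apply_coe]
  simp only [hpow]
  split_ifs with hu1
  · simp [hu1, Nat.cast_sub Fintype.card_pos]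
  · have hTu : T u ≠ 1 := fun h => hu1 (eq_one_of_apply_eq_one_of_forall_eq_pow_s17 hT h)
    rw [geom_sum_eq hTu, ← map_pow, FiniteField.pow_card_sub_one_eq_one u hu0, map_one,
      sub_self, zero_div]

theorem MulChar.sum_range_pow_mul_sum_mul_sum_mul_apply
    (hT : ∀ χ : MulChar F ℂ, ∃ k : ℕ, χ = T ^ k) (f g : F → ℂ) (hf : f 0 = 0) {c : F}
    (hc : c ≠ 0) :
    ∑ m ∈ range (Fintype.card F - 1),
        (∑ a, f a * (T ^ m) a) * (∑ b, g b * (T ^ m) b) * (T ^ m) c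
      = ((Fintype.card F : ℂ) - 1) * ∑ a, f a * g (a * c)⁻¹ := by
  classical
  have hsolve (a b : F) (ha : a ≠ 0) : a * b * c = 1 ↔ b = (a * c)⁻¹ := by
    refine ⟨fun h => eq_inv_of_mul_eq_one_left ?_, ?_⟩
    · rw [← h]; ring
    · rintro rfl
      rw [mul_right_comm, mul_inv_cancel₀ (mul_ne_zero ha hc)]
  calc _ = ∑ m ∈ range (Fintype.card F - 1), ∑ a, ∑ b, f a * g b * (T ^ m) (a * b * c) := by
          refine sum_congr rfl fun m _ => ?_
          rw [sum_mul_sum, sum_mul]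
          refine sum_congr rfl fun a _ => ?_
          rw [sum_mul]
          refine sum_congr rfl fun b _ => ?_
          rw [map_mul, map_mul]
          ring
    _ = ∑ a, ∑ b, f a * g b * ∑ m ∈ range (Fintype.card F - 1), (T ^ m) (a * b * c) := by
          rw [sum_comm]
          refine sum_congr rfl fun a _ => ?_
          rw [sum_comm]
          simp only [mul_sum]
    _ = _ := by
          simp only [sum_range_pow_apply_of_forall_eq_pow hT, mul_sum]
          refine sum_congr rfl fun a _ => ?_
          rcases eq_or_ne a 0 with rfl | ha
          · simp [hf]
          simp only [hsolve a _ ha, mul_ite, mul_zero, sum_ite_eq', mem_univ, if_true]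
          ring

end Generator

section Quadratic

variable {F : Type*} [Field F] [Fintype F] [DecidableEq F]

theorem MulChar.pow_card_sub_one_div_two_eq_quadraticChar (hF : ringChar F ≠ 2)
    {T : MulChar F ℂ} (hT : ∀ χ : MulChar F ℂ, ∃ k : ℕ, χ = T ^ k) :
    T ^ ((Fintype.card F - 1) / 2) = (quadraticChar F).ringHomComp (Int.castRingHom ℂ) := by
  have hT1 : T (-1) = -1 := by
    have hsq : T (-1) * T (-1) = 1 := by rw [← map_mul, neg_one_mul, neg_neg, map_one]
    refine (mul_self_eq_one_iff.mp hsq).resolve_left fun h => ?_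
    exact Ring.neg_one_ne_one_of_char_ne_two hF (eq_one_of_apply_eq_one_of_forall_eq_pow_s17 hT h)
  have hhalf : (Fintype.card F - 1) / 2 = Fintype.card F / 2 := by
    have := FiniteField.odd_card_of_char_ne_two hF
    grind
  ext a
  rw [MulChar.pow_apply_coe, ← map_pow, hhalf, ← quadraticChar_eq_pow_of_char_ne_two' hF,
    MulChar.ringHomComp_apply]
  rcases quadraticChar_dichotomy a.ne_zero with h | h <;> simp [h, hT1]

theorem sum_comp_sq_eq_sum_quadraticChar (hF : ringChar F ≠ 2) (f : F → ℂ) :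
    ∑ u, f (u ^ 2) = ∑ t, ((quadraticChar F t : ℂ) + 1) * f t := by
  rw [← sum_fiberwise univ (fun u => u ^ 2)]
  refine sum_congr rfl fun t _ => ?_
  have hcard := congrArg (Int.cast : ℤ → ℂ) (quadraticChar_card_sqrts hF t)
  rw [Set.toFinset_ofPred] at hcard
  push_cast at hcard
  rw [← hcard, ← nsmul_eq_mul, ← sum_const]
  exact sum_congr rfl fun u hu => by rw [(mem_filter.mp hu).2]

end Quadratic

section CharacterSums

variable {F : Type*} [Field F] [Fintype F]

theorem jacobiSum_mul_inv_eq_sum {R : Type*} [CommRing R] [Nontrivial R] (A χ : MulChar F R) :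
    jacobiSum (A * χ) χ⁻¹ = ∑ a, A (a * (1 + a)⁻¹) * χ a := by
  -- `σ x = (x⁻¹ - 1)⁻¹` agrees with `x / (1 - x)` except at `x = 0`, where `A 0 = 0`.
  let σ : Equiv.Perm F := (Equiv.inv F).trans ((Equiv.subRight 1).trans (Equiv.inv F))
  calc jacobiSum (A * χ) χ⁻¹ = ∑ x, A x * χ (σ x) := by
        refine sum_congr rfl fun x _ => ?_
        rcases eq_or_ne x 0 with rfl | hx
        · simp [MulChar.map_zero]
        have hσ : x * (1 - x)⁻¹ = (x⁻¹ - 1)⁻¹ := by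
          rw [show x⁻¹ - 1 = x⁻¹ * (1 - x) by rw [mul_sub, mul_one, inv_mul_cancel₀ hx],
            mul_inv_rev, inv_inv, mul_comm]
        simp [σ, MulChar.inv_apply', mul_assoc, ← map_mul, hσ]
    _ = ∑ a, A (σ.symm a) * χ a := by
        rw [← Equiv.sum_comp σ (fun a => A (σ.symm a) * χ a)]
        simp
    _ = _ := by
        refine sum_congr rfl fun a _ => ?_
        rcases eq_or_ne a 0 with rfl | ha
        · simp [MulChar.map_zero]
        have hσ : (a⁻¹ + 1)⁻¹ = a * (1 + a)⁻¹ := by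
          rw [show a⁻¹ + 1 = a⁻¹ * (1 + a) by rw [mul_add, mul_one, inv_mul_cancel₀ ha],
            mul_inv_rev, inv_inv, mul_comm]
        simp [σ, hσ]

theorem MulChar.IsQuadratic.sum_mul_inv_mul_inv_eq_sum_mul_one_sub_sq {φ : MulChar F ℂ}
    (hφ : φ.IsQuadratic) (hφ1 : φ (-1) = 1) (h2 : (2 : F) ≠ 0) :
    ∑ a, φ (a * (1 + a)⁻¹) * φ (1 + 2⁻¹ * a)⁻¹ = φ 2 * ∑ u, φ u * φ (1 - u ^ 2) := by
  have hinv (y : F) : φ y⁻¹ = φ y := by rw [← MulChar.inv_apply', hφ.inv]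
  have hshift := Equiv.sum_comp (Equiv.subRight (1 : F)) fun a => φ a * φ (1 + a) * φ (2 + a)
  calc ∑ a, φ (a * (1 + a)⁻¹) * φ (1 + 2⁻¹ * a)⁻¹
      = φ 2 * ∑ a, φ a * φ (1 + a) * φ (2 + a) := by
        rw [mul_sum]
        refine sum_congr rfl fun a _ => ?_
        rw [show 1 + 2⁻¹ * a = 2⁻¹ * (2 + a) by field_simp]
        simp only [map_mul, hinv]
        ring
    _ = φ 2 * ∑ u, φ u * φ (1 - u ^ 2) := by
        rw [← hshift]
        refine congrArg _ (sum_congr rfl fun u _ => ?_)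
        have hsq : (u - 1) * (u + 1) = -1 * (1 - u ^ 2) := by ring
        simp only [Equiv.subRight_apply]
        rw [show 1 + (u - 1) = u by ring, show 2 + (u - 1) = u + 1 by ring, mul_right_comm,
          ← map_mul, hsq, map_mul, hφ1, one_mul, mul_comm]

variable [DecidableEq F]

theorem sum_add_pow_three_mul_one_sub_eq_sum_mul_one_sub_sq {ψ φ : MulChar F ℂ}
    (hF : ringChar F ≠ 2) (hφ : φ = (quadraticChar F).ringHomComp (Int.castRingHom ℂ))
    (hψ : ψ ^ 2 = φ) :
    ∑ t, (ψ t + (ψ ^ 3) t) * φ (1 - t) = ∑ u, φ u * φ (1 - u ^ 2) := by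
  have hψ4 : ψ ^ 4 = 1 := by
    rw [show 4 = 2 * 2 by rfl, pow_mul, hψ, hφ, ((quadraticChar_isQuadratic F).comp _).sq_eq_one]
  have hsq (u : F) : ψ (u ^ 2) + (ψ ^ 3) (u ^ 2) = 2 * φ u := by
    rw [map_pow, map_pow, ← MulChar.pow_apply' _ two_ne_zero, ← MulChar.pow_apply' _ two_ne_zero,
      ← pow_mul, show ψ ^ (3 * 2) = ψ ^ 4 * ψ ^ 2 by group, hψ4, one_mul, hψ]
    ring
  have hfix (t : F) : (φ t + 1) * (ψ t + (ψ ^ 3) t) = 2 * (ψ t + (ψ ^ 3) t) := by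
    have h3 : φ t * ψ t = (ψ ^ 3) t := by rw [← hψ, ← MulChar.mul_apply, ← pow_succ]
    have h5 : φ t * (ψ ^ 3) t = ψ t := by
      rw [← hψ, ← MulChar.mul_apply, ← pow_add, show ψ ^ (2 + 3) = ψ ^ 4 * ψ by group, hψ4,
        one_mul]
    linear_combination h3 + h5
  have hφt (t : F) : φ t = (quadraticChar F t : ℂ) := by
    rw [hφ, MulChar.ringHomComp_apply, eq_intCast]
  refine mul_left_cancel₀ (two_ne_zero (α := ℂ)) ?_
  calc 2 * ∑ t, (ψ t + (ψ ^ 3) t) * φ (1 - t)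
      = ∑ t, ((quadraticChar F t : ℂ) + 1) * ((ψ t + (ψ ^ 3) t) * φ (1 - t)) := by
        rw [mul_sum]
        refine sum_congr rfl fun t _ => ?_
        rw [← hφt, ← mul_assoc (φ t + 1), hfix, mul_assoc]
    _ = ∑ u, (ψ (u ^ 2) + (ψ ^ 3) (u ^ 2)) * φ (1 - u ^ 2) :=
        (sum_comp_sq_eq_sum_quadraticChar hF fun t => (ψ t + (ψ ^ 3) t) * φ (1 - t)).symm
    _ = 2 * ∑ u, φ u * φ (1 - u ^ 2) := by
        rw [mul_sum]
        refine sum_congr rfl fun u _ => ?_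
        rw [hsq, mul_assoc]

end CharacterSums

section Greene

variable {F : Type} [Field F] [Fintype F]

theorem MulChar.IsQuadratic.greeneBinom_eq
    {φ : MulChar F ℂ} (hφ : φ.IsQuadratic) (hφ1 : φ (-1) = 1) (A : MulChar F ℂ) :
    greeneBinom F A φ = (Fintype.card F : ℂ)⁻¹ * ∑ t, A t * φ (1 - t) := by
  rw [greeneBinom, hφ.inv, hφ1, jacobiSum, one_div]

theorem hyp2F1_self_one_eq_sum {T : MulChar F ℂ}
    (hT : ∀ χ : MulChar F ℂ, ∃ k : ℕ, χ = T ^ k) (A : MulChar F ℂ) {c : F} (hc : c ≠ 0) :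
    hyp2F1 F (Fintype.card F) T A A 1 c
      = (Fintype.card F : ℂ)⁻¹ * ∑ a, A (a * (1 + a)⁻¹) * A (1 + c * a)⁻¹ := by
  let f (a : F) : ℂ := A (a * (1 + a)⁻¹)
  have hq1 : (Fintype.card F : ℂ) - 1 ≠ 0 :=
    sub_ne_zero.mpr (by exact_mod_cast Fintype.one_lt_card.ne')
  have hsign (χ : MulChar F ℂ) : χ (-1) * χ (-1) = 1 := by
    rw [← map_mul, neg_one_mul, neg_neg, map_one]
  have hconv : ∑ a, f a * f (a * c)⁻¹ = ∑ a, A (a * (1 + a)⁻¹) * A (1 + c * a)⁻¹ := by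
    refine sum_congr rfl fun a _ => ?_
    rcases eq_or_ne a 0 with rfl | ha
    · simp [f, MulChar.map_zero]
    · simp only [f]
      congr 2
      rw [← mul_inv, mul_add, mul_one, mul_inv_cancel₀ (mul_ne_zero ha hc)]
      ring
  calc hyp2F1 F (Fintype.card F) T A A 1 c
      = (Fintype.card F : ℂ) / (Fintype.card F - 1) * ∑ m ∈ range (Fintype.card F - 1),
          ((Fintype.card F : ℂ) ^ 2)⁻¹ *
            ((∑ a, f a * (T ^ m) a) * (∑ b, f b * (T ^ m) b) * (T ^ m) c) := by
        simp only [hyp2F1, one_mul, greeneBinom, jacobiSum_mul_inv_eq_sum]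
        congr 1
        refine sum_congr rfl fun m _ => ?_
        linear_combination (∑ a, f a * (T ^ m) a) ^ 2 * (T ^ m) c /
          (Fintype.card F : ℂ) ^ 2 * hsign (T ^ m)
    _ = (Fintype.card F : ℂ) / (Fintype.card F - 1) * ((Fintype.card F : ℂ) ^ 2)⁻¹ *
          (((Fintype.card F : ℂ) - 1) * ∑ a, f a * f (a * c)⁻¹) := by
        rw [← mul_sum, MulChar.sum_range_pow_mul_sum_mul_sum_mul_apply hT f f
          (by simp [f, MulChar.map_zero]) hc, mul_assoc]
    _ = _ := by
        rw [hconv, ← mul_assoc]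
        congr 1
        field_simp

end Greene

theorem hyp2F1_half_value_general (F : Type) [Field F] [Fintype F] (q : ℕ)
    (hcard : Fintype.card F = q) (h4 : 4 ∣ q - 1)
    (T : MulChar F ℂ) (hT : ∀ χ : MulChar F ℂ, ∃ k : ℕ, χ = T ^ k)
    (φ : MulChar F ℂ) (hφ : φ = T ^ ((q - 1) / 2)) :
    hyp2F1 F q T φ φ 1 ((2 : F)⁻¹)
      = φ (-2) * (greeneBinom F (T ^ ((q - 1) / 4)) φ
          + greeneBinom F (T ^ (3 * (q - 1) / 4)) φ) := by
  classical
  subst hcard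
  have hF : ringChar F ≠ 2 := fun h => by
    have := FiniteField.even_card_iff_char_two.mp h
    have := Fintype.card_pos (α := F)
    omega
  have hφq : φ = (quadraticChar F).ringHomComp (Int.castRingHom ℂ) :=
    hφ.trans (MulChar.pow_card_sub_one_div_two_eq_quadraticChar hF hT)
  have hquad : φ.IsQuadratic := hφq ▸ (quadraticChar_isQuadratic F).comp _
  have h2 : (2 : F) ≠ 0 := Ring.two_ne_zero hF
  have hφ1 : φ (-1) = 1 := by
    have hsq : IsSquare (-1 : F) := FiniteField.isSquare_neg_one_iff.mpr (by omega)
    rw [hφq, MulChar.ringHomComp_apply,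
      (quadraticChar_one_iff_isSquare (neg_ne_zero.mpr one_ne_zero)).mpr hsq, map_one]
  have hψ : (T ^ ((Fintype.card F - 1) / 4)) ^ 2 = φ := by
    rw [hφ, ← pow_mul]
    congr 1
    omega
  have hψ3 : T ^ (3 * (Fintype.card F - 1) / 4) = (T ^ ((Fintype.card F - 1) / 4)) ^ 3 := by
    rw [← pow_mul]
    congr 1
    omega
  rw [hyp2F1_self_one_eq_sum hT φ (inv_ne_zero h2),
    hquad.sum_mul_inv_mul_inv_eq_sum_mul_one_sub_sq hφ1 h2, hψ3, hquad.greeneBinom_eq hφ1,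
    hquad.greeneBinom_eq hφ1, ← mul_add, ← sum_add_distrib]
  simp only [← add_mul]
  rw [sum_add_pow_three_mul_one_sub_eq_sum_mul_one_sub_sq hF hφq hψ,
    show (-2 : F) = -1 * 2 by ring, map_mul, hφ1, one_mul]
  ring

/-- For `q ≡ 1 (mod 4)`,
`₂F₁(φ, φ; ε | 1/2) = φ(-2)·[binom(T^{(q-1)/4}, φ) + binom(T^{3(q-1)/4}, φ)]`. -/
theorem hyp2F1_half_value (F : Type) [Field F] [Fintype F] (q : ℕ)
    (hcard : Fintype.card F = q) (hq : IsPrimePow q) (h4 : 4 ∣ q - 1)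
    (T : MulChar F ℂ) (hT : ∀ χ : MulChar F ℂ, ∃ k : ℕ, χ = T ^ k)
    (φ : MulChar F ℂ) (hφ : φ = T ^ ((q - 1) / 2)) :
    hyp2F1 F q T φ φ 1 ((2 : F)⁻¹)
      = φ (-2) * (greeneBinom F (T ^ ((q - 1) / 4)) φ
          + greeneBinom F (T ^ (3 * (q - 1) / 4)) φ) :=
  hyp2F1_half_value_general F q hcard h4 T hT φ hφ
end
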